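/- arXiv:2401.00927 — 2 statements merged into one kernel-verified Lean document; each statement's English description precedes it below -/
import Mathlib

section
/- Suppose JA and JB are affine maps. Then for all γ ∈ (0,1) and λ ∈ (0,1], the commutator of the two Aragón Artacho–Campoy operators satisfies T(Aγ,Bγ)∘T(Bγ,Aγ) − T(Bγ,Aγ)∘T(Aγ,Bγ) = λ²·(RBγ∘RAγ∘RAγ∘RBγ − RAγ∘RBγ∘RBγ∘RAγ), i.e. for every x ∈ X, T(Aγ,Bγ)(T(Bγ,Aγ)(x)) − T(Bγ,Aγ)(T(Aγ,Bγ)(x)) = λ²·(RBγ(RAγ(RAγ(RBγ(x)))) − RAγ(RBγ(RBγ(RAγ(x))))). -/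
section AffineCombinations

variable {R M : Type*} [CommRing R] [AddCommGroup M] [Module R M]

def PreservesAffineCombinations (F : M → M) : Prop :=
  ∀ (x y : M) (t : R), F (t • x + (1 - t) • y) = t • F x + (1 - t) • F y

theorem PreservesAffineCombinations.smul_add_sub {F : M → M}
    (hF : PreservesAffineCombinations (R := R) F) (a : R) (b : M) :
    PreservesAffineCombinations (R := R) (fun x => a • F x + b - x) := by
  intro x y t
  simp only [hF x y t]
  module

theorem PreservesAffineCombinations.congr {F G : M → M}
    (hF : PreservesAffineCombinations (R := R) F) (hFG : ∀ x, G x = F x) :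
    PreservesAffineCombinations (R := R) G := by
  simpa only [← funext hFG] using hF

/-- The Aragón Artacho–Campoy operator `T(A,B)` when `F`, `G` are the reflected resolvents of
`A`, `B`. -/
def relaxedComp (lam : R) (F G : M → M) (x : M) : M :=
  (1 - lam) • x + lam • G (F x)

/- Affinity pushes the outer operator through the inner relaxation; the terms of order `1` and
`λ (1 - λ)` then cancel in the difference, leaving only the `λ²` ones. -/
theorem relaxedComp_comm_sub {F G : M → M}
    (hF : PreservesAffineCombinations (R := R) F) (hG : PreservesAffineCombinations (R := R) G)
    (lam : R) (x : M) :
    relaxedComp lam F G (relaxedComp lam G F x) - relaxedComp lam G F (relaxedComp lam F G x)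
      = lam ^ 2 • (G (F (F (G x))) - F (G (G (F x)))) := by
  have hF' := fun x y => hF x y (1 - lam)
  have hG' := fun x y => hG x y (1 - lam)
  simp only [sub_sub_cancel] at hF' hG'
  simp only [relaxedComp, hF', hG']
  module

end AffineCombinations

theorem aacaStmt12_general {X : Type*} [NormedAddCommGroup X] [InnerProductSpace ℝ X]
    (JA JB : X → X)
    (hJA : ∀ (x y : X) (t : ℝ), JA (t • x + (1 - t) • y) = t • JA x + (1 - t) • JA y)
    (hJB : ∀ (x y : X) (t : ℝ), JB (t • x + (1 - t) • y) = t • JB x + (1 - t) • JB y)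
    (w : X) (γ lam : ℝ)
    (RAγ RBγ TAγBγ TBγAγ : X → X)
    (hRAγ : ∀ x, RAγ x = (2 * γ) • JA x + (2 * (1 - γ)) • w - x)
    (hRBγ : ∀ x, RBγ x = (2 * γ) • JB x + (2 * (1 - γ)) • w - x)
    (hTAB : ∀ x, TAγBγ x = (1 - lam) • x + lam • RBγ (RAγ x))
    (hTBA : ∀ x, TBγAγ x = (1 - lam) • x + lam • RAγ (RBγ x)) :
    ∀ x : X, TAγBγ (TBγAγ x) - TBγAγ (TAγBγ x)
      = (lam ^ 2) • (RBγ (RAγ (RAγ (RBγ x))) - RAγ (RBγ (RBγ (RAγ x)))) := by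
  have hRA : PreservesAffineCombinations (R := ℝ) RAγ :=
    (PreservesAffineCombinations.smul_add_sub hJA _ _).congr hRAγ
  have hRB : PreservesAffineCombinations (R := ℝ) RBγ :=
    (PreservesAffineCombinations.smul_add_sub hJB _ _).congr hRBγ
  intro x
  rw [show TAγBγ = relaxedComp lam RAγ RBγ from funext hTAB,
    show TBγAγ = relaxedComp lam RBγ RAγ from funext hTBA]
  exact relaxedComp_comm_sub hRA hRB lam x

theorem aacaStmt12 {X : Type*} [NormedAddCommGroup X] [InnerProductSpace ℝ X] [CompleteSpace X]
    (JA JB : X → X)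
    (hJA : ∀ (x y : X) (t : ℝ), JA (t • x + (1 - t) • y) = t • JA x + (1 - t) • JA y)
    (hJB : ∀ (x y : X) (t : ℝ), JB (t • x + (1 - t) • y) = t • JB x + (1 - t) • JB y)
    (w : X) (γ lam : ℝ)
    (hγ : γ ∈ Set.Ioo (0 : ℝ) 1) (hlam : lam ∈ Set.Ioc (0 : ℝ) 1)
    (RAγ RBγ TAγBγ TBγAγ : X → X)
    (hRAγ : ∀ x, RAγ x = (2 * γ) • JA x + (2 * (1 - γ)) • w - x)
    (hRBγ : ∀ x, RBγ x = (2 * γ) • JB x + (2 * (1 - γ)) • w - x)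
    (hTAB : ∀ x, TAγBγ x = (1 - lam) • x + lam • RBγ (RAγ x))
    (hTBA : ∀ x, TBγAγ x = (1 - lam) • x + lam • RAγ (RBγ x)) :
    ∀ x : X, TAγBγ (TBγAγ x) - TBγAγ (TAγBγ x)
      = (lam ^ 2) • (RBγ (RAγ (RAγ (RBγ x))) - RAγ (RBγ (RBγ (RAγ x)))) :=
  aacaStmt12_general JA JB hJA hJB w γ lam RAγ RBγ TAγBγ TBγAγ hRAγ hRBγ hTAB hTBA
end

section
/- Suppose JA and JB are affine maps. Then for all γ ∈ (0,1) and λ ∈ (0,1], the two Aragón Artacho–Campoy operators commute, T(Aγ,Bγ)∘T(Bγ,Aγ) = T(Bγ,Aγ)∘T(Aγ,Bγ), if and only if RBγ∘RAγ∘RAγ∘RBγ = RAγ∘RBγ∘RBγ∘RAγ. -/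
/-!
Reflected resolvents of affine resolvents are affine, hence so are `RBγ ∘ RAγ` and
`RAγ ∘ RBγ`. For affine `P` and `Q`, expanding `P` across the affine combination
`(1 - λ) x + λ Q x` gives
`T_P (T_Q x) - T_Q (T_P x) = λ² (P (Q x) - Q (P x))` for the relaxations `T_P`, `T_Q`,
so the relaxations commute exactly when `P` and `Q` do.
-/

section Ring

variable {R V : Type*} [CommRing R] [AddCommGroup V] [Module R V]

variable (R) in
def IsAffineFun (f : V → V) : Prop :=
  ∀ (x y : V) (t : R), f (t • x + (1 - t) • y) = t • f x + (1 - t) • f y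

theorem IsAffineFun.comp {f g : V → V} (hf : IsAffineFun R f) (hg : IsAffineFun R g) :
    IsAffineFun R (f ∘ g) := by
  intro x y t
  simp only [Function.comp_apply, hg x y t, hf (g x) (g y) t]

theorem IsAffineFun.smul_add_const_sub_id {J : V → V} (hJ : IsAffineFun R J) (c : R) (v : V) :
    IsAffineFun R (fun x ↦ c • J x + v - x) := by
  intro x y t
  simp only [hJ x y t]
  module

def relaxation (lam : R) (P : V → V) (x : V) : V :=
  (1 - lam) • x + lam • P x

theorem relaxation_comm_sub {P Q : V → V} (hP : IsAffineFun R P) (hQ : IsAffineFun R Q)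
    (lam : R) (x : V) :
    relaxation lam P (relaxation lam Q x) - relaxation lam Q (relaxation lam P x)
      = (lam * lam) • (P (Q x) - Q (P x)) := by
  have expand : ∀ {F G : V → V}, IsAffineFun R F →
      F ((1 - lam) • x + lam • G x) = (1 - lam) • F x + lam • F (G x) := by
    intro F G hF
    simpa only [sub_sub_cancel] using hF x (G x) (1 - lam)
  simp only [relaxation, expand hP, expand hQ]
  module

end Ring

theorem relaxation_commute_iff {R V : Type*} [Field R] [AddCommGroup V] [Module R V] {P Q : V → V}
    (hP : IsAffineFun R P) (hQ : IsAffineFun R Q) {lam : R} (hlam : lam ≠ 0) :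
    Function.Commute (relaxation lam P) (relaxation lam Q) ↔ Function.Commute P Q := by
  refine forall_congr' fun x ↦ ?_
  rw [← sub_eq_zero, relaxation_comm_sub hP hQ, smul_eq_zero, sub_eq_zero]
  simp [hlam]

theorem aacaStmt13_general {X : Type*} [NormedAddCommGroup X] [InnerProductSpace ℝ X]
    (JA JB : X → X)
    (hJA : ∀ (x y : X) (t : ℝ), JA (t • x + (1 - t) • y) = t • JA x + (1 - t) • JA y)
    (hJB : ∀ (x y : X) (t : ℝ), JB (t • x + (1 - t) • y) = t • JB x + (1 - t) • JB y)
    (w : X) (γ lam : ℝ)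
    (hlam : lam ∈ Set.Ioc (0 : ℝ) 1)
    (RAγ RBγ TAγBγ TBγAγ : X → X)
    (hRAγ : ∀ x, RAγ x = (2 * γ) • JA x + (2 * (1 - γ)) • w - x)
    (hRBγ : ∀ x, RBγ x = (2 * γ) • JB x + (2 * (1 - γ)) • w - x)
    (hTAB : ∀ x, TAγBγ x = (1 - lam) • x + lam • RBγ (RAγ x))
    (hTBA : ∀ x, TBγAγ x = (1 - lam) • x + lam • RAγ (RBγ x)) :
    (∀ x : X, TAγBγ (TBγAγ x) = TBγAγ (TAγBγ x)) ↔
      (∀ x : X, RBγ (RAγ (RAγ (RBγ x))) = RAγ (RBγ (RBγ (RAγ x)))) := by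
  have hRA : IsAffineFun ℝ RAγ := funext hRAγ ▸ IsAffineFun.smul_add_const_sub_id hJA _ _
  have hRB : IsAffineFun ℝ RBγ := funext hRBγ ▸ IsAffineFun.smul_add_const_sub_id hJB _ _
  obtain rfl : TAγBγ = relaxation lam (RBγ ∘ RAγ) := funext hTAB
  obtain rfl : TBγAγ = relaxation lam (RAγ ∘ RBγ) := funext hTBA
  exact relaxation_commute_iff (hRB.comp hRA) (hRA.comp hRB) hlam.1.ne'

theorem aacaStmt13 {X : Type*} [NormedAddCommGroup X] [InnerProductSpace ℝ X] [CompleteSpace X]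
    (JA JB : X → X)
    (hJA : ∀ (x y : X) (t : ℝ), JA (t • x + (1 - t) • y) = t • JA x + (1 - t) • JA y)
    (hJB : ∀ (x y : X) (t : ℝ), JB (t • x + (1 - t) • y) = t • JB x + (1 - t) • JB y)
    (w : X) (γ lam : ℝ)
    (hγ : γ ∈ Set.Ioo (0 : ℝ) 1) (hlam : lam ∈ Set.Ioc (0 : ℝ) 1)
    (RAγ RBγ TAγBγ TBγAγ : X → X)
    (hRAγ : ∀ x, RAγ x = (2 * γ) • JA x + (2 * (1 - γ)) • w - x)
    (hRBγ : ∀ x, RBγ x = (2 * γ) • JB x + (2 * (1 - γ)) • w - x)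
    (hTAB : ∀ x, TAγBγ x = (1 - lam) • x + lam • RBγ (RAγ x))
    (hTBA : ∀ x, TBγAγ x = (1 - lam) • x + lam • RAγ (RBγ x)) :
    (∀ x : X, TAγBγ (TBγAγ x) = TBγAγ (TAγBγ x)) ↔
      (∀ x : X, RBγ (RAγ (RAγ (RBγ x))) = RAγ (RBγ (RBγ (RAγ x)))) :=
  aacaStmt13_general JA JB hJA hJB w γ lam hlam RAγ RBγ TAγBγ TBγAγ hRAγ hRBγ hTAB hTBA
end
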